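/- arXiv:2109.00261 — 2 statements merged into one kernel-verified Lean document; each statement's English description precedes it below -/
import Mathlib

section
/- Let K be a full filtered complex with comp(K) = (a,b). If b < ∞ and L(K) ≠ K then comp(L(K)) < comp(K) in the lexicographic order; moreover for any subcomplex L ⊂ K with the induced filtration, comp(L) ≤ comp(K), and for any clot β, comp(L_β) < comp(K). -/
open Finset Set
open scoped Classical
noncomputable section

abbrev Zm := WithBot (WithTop ℤ)

variable {E : Type*} [NormedAddCommGroup E] [NormedSpace ℝ E]

/-- A filtered simplicial complex: a geometric simplicial complex `K` in `E`
together with a filtration by subcomplexes `K = K_n ⊇ K_{n-1} ⊇ ... ⊇ K_0`. -/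
structure FilteredComplex (E : Type*) [NormedAddCommGroup E] [NormedSpace ℝ E] where
  n : ℕ
  K : Geometry.SimplicialComplex ℝ E
  filt : ℕ → Set (Finset E)
  filt_sub : ∀ i, filt i ⊆ K.faces
  filt_mono : Monotone filt
  filt_top : ∀ i, n ≤ i → filt i = K.faces
  filt_down : ∀ i, ∀ s ∈ filt i, ∀ t ∈ K.faces, t ⊆ s → t ∈ filt i

/-- Geometric realization of a set of simplices. -/
def creal (S : Set (Finset E)) : Set E := ⋃ s ∈ S, convexHull ℝ (s : Set E)

def FilteredComplex.realLt (F : FilteredComplex E) (i : ℕ) : Set E :=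
  if i = 0 then ∅ else creal (F.filt (i - 1))

/-- The set `|K_i| \ |K_{i-1}|` whose connected components are the `i`-strata. -/
def FilteredComplex.stratumSet (F : FilteredComplex E) (i : ℕ) : Set E :=
  creal (F.filt i) \ F.realLt i

/-- `S` is an `i`-dimensional stratum of `F`. -/
def FilteredComplex.IsStratum (F : FilteredComplex E) (i : ℕ) (S : Set E) : Prop :=
  i ≤ F.n ∧ ∃ x ∈ F.stratumSet i, S = connectedComponentIn (F.stratumSet i) x

/-- A filtered complex is full if each simplex meets each `|K_ℓ|` in a face (or not at all). -/
def FilteredComplex.Full (F : FilteredComplex E) : Prop :=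
  ∀ σ ∈ F.K.faces, ∀ ℓ : ℕ,
    convexHull ℝ (σ : Set E) ∩ creal (F.filt ℓ) = ∅ ∨
    ∃ t, t ⊆ σ ∧ t.Nonempty ∧
      convexHull ℝ (σ : Set E) ∩ creal (F.filt ℓ) = convexHull ℝ (t : Set E)

/-- `dim (σ ∩ |K_i|) + 1`, computed (in a full complex) as the number of vertices of `σ`
lying in `|K_i|`. -/
def FilteredComplex.nrm (F : FilteredComplex E) (σ : Finset E) (i : ℕ) : ℕ :=
  (σ.filter (fun v => v ∈ creal (F.filt i))).card

/-- `p̄`-allowability of a simplex `σ` of a (full) filtered complex: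
for every singular stratum `S` of dimension `i` meeting `σ`,
`dim (σ ∩ S) ≤ dim σ - codim S + p̄(S)`, written additively in `ℤ ∪ {±∞}`. -/
def FilteredComplex.Allowable (F : FilteredComplex E) (p : Set E → Zm) (σ : Finset E) : Prop :=
  ∀ i : ℕ, i < F.n → ∀ S : Set E, F.IsStratum i S →
    (convexHull ℝ (σ : Set E) ∩ S).Nonempty →
    (F.nrm σ i : Zm) + ((F.n - i : ℕ) : Zm) ≤ (σ.card : Zm) + p S

end

noncomputable section
open Finset Set
open scoped Classical

variable {E : Type*} [NormedAddCommGroup E] [NormedSpace ℝ E]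

/-- The complexity of a filtration `filt` of virtual dimension `n`: the pair `(a,b)` with
`a = max {k ≤ n : K_{n-k} ≠ ∅}` and `b = dim K_{n-a} ∈ ℕ ∪ {∞}`, with value `⊥ = (−∞,−∞)` for
the empty complex; pairs are compared lexicographically. -/
def cmplx (n : ℕ) (filt : ℕ → Set (Finset E)) : WithBot (Lex (ℕ × ℕ∞)) :=
  if (filt n).Nonempty then
    (↑(toLex ((sSup {k | k ≤ n ∧ (filt (n - k)).Nonempty} : ℕ),
      (⨆ σ ∈ filt (n - sSup {k | k ≤ n ∧ (filt (n - k)).Nonempty}), ((σ.card : ℕ∞) - 1)))) :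
        WithBot (Lex (ℕ × ℕ∞)))
  else ⊥

def compA (F : FilteredComplex E) : ℕ := sSup {k | k ≤ F.n ∧ (F.filt (F.n - k)).Nonempty}

def compB (F : FilteredComplex E) : ℕ∞ :=
  ⨆ σ ∈ F.filt (F.n - compA F), ((σ.card : ℕ∞) - 1)

/-- The residual complex `L(K) = {σ ∈ K : dim (σ ∩ |K_{n-a}|) < b}`; in a full complex
`dim (σ ∩ |K_{n-a}|) = (number of vertices of σ in |K_{n-a}|) - 1`. -/
def resid (F : FilteredComplex E) : Set (Finset E) :=
  {σ | σ ∈ F.K.faces ∧ ((F.nrm σ (F.n - compA F) : ℕ∞)) ≤ compB F}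

/-- The link of a simplex `β`. -/
def lk (F : FilteredComplex E) (β : Finset E) : Set (Finset E) :=
  {α | α ∈ F.K.faces ∧ Disjoint α β ∧ α ∪ β ∈ F.K.faces}

/-- `β` is a clot: a simplex of `K_{n-a}` of maximal dimension. -/
def IsClot (F : FilteredComplex E) (β : Finset E) : Prop :=
  β ∈ F.filt (F.n - compA F) ∧ ∀ σ ∈ F.filt (F.n - compA F), σ.card ≤ β.card

/-- `L` is a simplicial subcomplex of `K`. -/
def IsSubcomplexOf (K : Geometry.SimplicialComplex ℝ E) (L : Set (Finset E)) : Prop :=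
  L ⊆ K.faces ∧ ∀ s ∈ L, ∀ t : Finset E, t.Nonempty → t ⊆ s → t ∈ L

/-! ### Auxiliary lemmas -/

lemma aux_bddAbove {n : ℕ} (f : ℕ → Set (Finset E)) :
    BddAbove {k | k ≤ n ∧ (f (n - k)).Nonempty} :=
  ⟨n, fun _ hk => hk.1⟩

lemma aux_zero_mem {n : ℕ} {f : ℕ → Set (Finset E)} (hf : (f n).Nonempty) :
    0 ∈ {k | k ≤ n ∧ (f (n - k)).Nonempty} := by
  refine ⟨Nat.zero_le n, ?_⟩
  simpa using hf

lemma aux_sSup_le_sSup {n : ℕ} {f g : ℕ → Set (Finset E)} (h : ∀ i, g i ⊆ f i)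
    (hg : (g n).Nonempty) :
    sSup {k | k ≤ n ∧ (g (n - k)).Nonempty} ≤ sSup {k | k ≤ n ∧ (f (n - k)).Nonempty} := by
  refine csSup_le_csSup (aux_bddAbove f) ⟨0, aux_zero_mem hg⟩ ?_
  rintro k ⟨hk, hne⟩
  exact ⟨hk, hne.mono (h _)⟩

lemma aux_sSup_mem {n : ℕ} {g : ℕ → Set (Finset E)} (hg : (g n).Nonempty) :
    (g (n - sSup {k | k ≤ n ∧ (g (n - k)).Nonempty})).Nonempty :=
  (Nat.sSup_mem ⟨0, aux_zero_mem hg⟩ (aux_bddAbove g)).2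

/-- Monotonicity of complexity. -/
lemma cmplx_le {n : ℕ} {f g : ℕ → Set (Finset E)} (h : ∀ i, g i ⊆ f i) :
    cmplx n g ≤ cmplx n f := by
  unfold cmplx
  by_cases hg : (g n).Nonempty
  · have hf : (f n).Nonempty := hg.mono (h n)
    rw [if_pos hg, if_pos hf]
    refine WithBot.coe_le_coe.2 ?_
    rw [Prod.Lex.le_iff]
    dsimp only [ofLex_toLex]
    rcases lt_or_eq_of_le (aux_sSup_le_sSup h hg) with hlt | heq
    · exact Or.inl hlt
    · refine Or.inr ⟨heq, ?_⟩
      rw [heq]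
      exact iSup_le_iSup_of_subset (h _)
  · rw [if_neg hg]
    exact bot_le

/-- Strict decrease of complexity. -/
lemma cmplx_lt {n : ℕ} {f g : ℕ → Set (Finset E)} (h : ∀ i, g i ⊆ f i)
    (hf : (f n).Nonempty)
    (hkey : g (n - sSup {k | k ≤ n ∧ (f (n - k)).Nonempty}) = ∅ ∨
      ∃ C : ℕ∞,
        C < (⨆ σ ∈ f (n - sSup {k | k ≤ n ∧ (f (n - k)).Nonempty}), ((σ.card : ℕ∞) - 1)) ∧
        ∀ σ ∈ g (n - sSup {k | k ≤ n ∧ (f (n - k)).Nonempty}), (σ.card : ℕ∞) - 1 ≤ C) :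
    cmplx n g < cmplx n f := by
  unfold cmplx
  rw [if_pos hf]
  by_cases hg : (g n).Nonempty
  · rw [if_pos hg]
    refine WithBot.coe_lt_coe.2 ?_
    rw [Prod.Lex.lt_iff]
    dsimp only [ofLex_toLex]
    have hle := aux_sSup_le_sSup h hg
    have hmem := aux_sSup_mem hg
    rcases hkey with hempty | ⟨C, hC, hall⟩
    · left
      refine lt_of_le_of_ne hle fun heq => ?_
      rw [heq, hempty] at hmem
      exact Set.not_nonempty_empty hmem
    · rcases lt_or_eq_of_le hle with hlt | heq
      · exact Or.inl hlt
      · refine Or.inr ⟨heq, lt_of_le_of_lt ?_ hC⟩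
        refine iSup₂_le fun σ hσ => ?_
        rw [heq] at hσ
        exact hall σ hσ
  · rw [if_neg hg]
    exact WithBot.bot_lt_coe _

lemma mem_creal_of_mem {S : Set (Finset E)} {σ : Finset E} (hσ : σ ∈ S) {v : E} (hv : v ∈ σ) :
    v ∈ creal S :=
  Set.mem_biUnion hσ (subset_convexHull ℝ (σ : Set E) hv)

/-- If all vertices of an affinely independent finset lie in a subset `u`
whose convex hull contains the centroid, then `σ ⊆ u`. -/
lemma subset_of_centroid_mem_convexHull {σ u : Finset E}
    (ha : AffineIndependent ℝ ((↑) : σ → E)) (hne : σ.Nonempty) (hu : u ⊆ σ)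
    (hx : σ.centroid ℝ id ∈ convexHull ℝ (u : Set E)) : σ ⊆ u := by
  obtain ⟨w, hw0, hw1, hwx⟩ := Finset.mem_convexHull.1 hx
  set w' : E → ℝ := Set.indicator (↑u) w with hw'
  have hcard : (σ.card : ℝ) ≠ 0 := by
    exact Nat.cast_ne_zero.2 (Finset.card_pos.2 hne).ne'
  have hrep2 : σ.centroid ℝ id
      = (Finset.univ : Finset σ).affineCombination ℝ ((↑) : σ → E) (w' ∘ (↑)) := by
    rw [Finset.univ_eq_attach, Finset.attach_affineCombination_coe,
      ← Finset.affineCombination_indicator_subset w id hu,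
      affineCombination_eq_centerMass hw1, hwx]
  have hrep1 : σ.centroid ℝ id
      = (Finset.univ : Finset σ).affineCombination ℝ ((↑) : σ → E)
          ((Finset.univ : Finset σ).centroidWeights ℝ) := by
    rw [← Finset.centroid_univ, Finset.centroid_def]
  have h1 : ∑ v ∈ (Finset.univ : Finset σ), (Finset.univ : Finset σ).centroidWeights ℝ v = 1 := by
    refine Finset.sum_centroidWeights_eq_one_of_nonempty ℝ _ ?_
    rw [Finset.univ_eq_attach]
    exact Finset.attach_nonempty_iff.2 hne
  have h2 : ∑ v ∈ (Finset.univ : Finset σ), (w' ∘ (↑)) v = 1 := by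
    rw [Finset.univ_eq_attach]
    calc ∑ v ∈ σ.attach, (w' ∘ (↑)) v = ∑ y ∈ σ, w' y := Finset.sum_attach σ w'
      _ = ∑ y ∈ u, w y := Finset.sum_indicator_subset w hu
      _ = 1 := hw1
  have hkey := ha.indicator_eq_of_affineCombination_eq _ _ _ _ h1 h2 (hrep1.symm.trans hrep2)
  intro v hv
  have hv' := congrFun hkey ⟨v, hv⟩
  rw [Finset.coe_univ, Set.indicator_univ, Set.indicator_univ] at hv'
  have hcw : (Finset.univ : Finset σ).centroidWeights ℝ ⟨v, hv⟩ ≠ 0 := by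
    rw [Finset.centroidWeights_apply]
    simp only [Finset.card_univ, Fintype.card_coe]
    exact inv_ne_zero hcard
  rw [hv'] at hcw
  by_contra hvu
  exact hcw (Set.indicator_of_notMem (by exact_mod_cast hvu) w)

/-- In a full filtered complex, a face all of whose vertices lie in `|K_ℓ|`
belongs to `K_ℓ`. -/
lemma full_mem (F : FilteredComplex E) (hfull : F.Full) {ℓ : ℕ} {σ : Finset E}
    (hσ : σ ∈ F.K.faces) (hv : ∀ v ∈ σ, v ∈ creal (F.filt ℓ)) : σ ∈ F.filt ℓ := by
  have hσne : σ.Nonempty :=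
    Finset.nonempty_of_ne_empty (fun h => F.K.empty_notMem (h ▸ hσ))
  rcases hfull σ hσ ℓ with hdisj | ⟨t, hts, htne, ht⟩
  · exfalso
    obtain ⟨v, hvσ⟩ := hσne
    have : v ∈ convexHull ℝ (σ : Set E) ∩ creal (F.filt ℓ) :=
      ⟨subset_convexHull ℝ _ hvσ, hv v hvσ⟩
    rw [hdisj] at this
    exact this
  · have htf : t ∈ F.K.faces := F.K.down_closed hσ hts htne
    have hsub : (σ : Set E) ⊆ convexHull ℝ (t : Set E) := by
      intro v hvσ
      rw [← ht]
      exact ⟨subset_convexHull ℝ _ hvσ, hv v hvσ⟩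
    have hhull : convexHull ℝ (σ : Set E) ⊆ convexHull ℝ (t : Set E) :=
      convexHull_min hsub (convex_convexHull ℝ _)
    have hreal : convexHull ℝ (σ : Set E) ⊆ creal (F.filt ℓ) := by
      refine hhull.trans ?_
      rw [← ht]
      exact Set.inter_subset_right
    have hx : σ.centroid ℝ id ∈ convexHull ℝ (σ : Set E) :=
      σ.centroid_mem_convexHull hσne
    obtain ⟨s, hs, hxs⟩ := Set.mem_iUnion₂.1 (hreal hx)
    have hsf : s ∈ F.K.faces := F.filt_sub ℓ hs
    have hxint : σ.centroid ℝ id ∈ convexHull ℝ ((σ ∩ s : Finset E) : Set E) := by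
      have := F.K.inter_subset_convexHull hσ hsf ⟨hx, hxs⟩
      rwa [← Finset.coe_inter] at this
    have hσs : σ ⊆ σ ∩ s :=
      subset_of_centroid_mem_convexHull (F.K.indep hσ) hσne Finset.inter_subset_left hxint
    exact F.filt_down ℓ s hs σ hσ fun v hvσ => (Finset.mem_inter.1 (hσs hvσ)).2

lemma nrm_eq_card (F : FilteredComplex E) {ℓ : ℕ} {σ : Finset E} (hσ : σ ∈ F.filt ℓ) :
    F.nrm σ ℓ = σ.card := by
  unfold FilteredComplex.nrm
  rw [Finset.filter_true_of_mem fun v hv => mem_creal_of_mem hσ hv]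

/-- Let `K` be a full filtered complex with `comp K = (a,b)`.
If `b < ∞` and `L(K) ≠ K` then `comp (L(K)) < comp K` (lexicographically); moreover for any
subcomplex `L ⊆ K` with the induced filtration, `comp L ≤ comp K`, and for any clot `β`,
`comp (L_β) < comp K`. -/
theorem complexity_comparisons (F : FilteredComplex E) (hfull : F.Full)
    (hne : (F.filt F.n).Nonempty) :
    ((compB F ≠ ⊤ → resid F ≠ F.K.faces →
        cmplx F.n (fun i => resid F ∩ F.filt i) < cmplx F.n F.filt) ∧
      (∀ L : Set (Finset E), IsSubcomplexOf F.K L →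
        cmplx F.n (fun i => L ∩ F.filt i) ≤ cmplx F.n F.filt) ∧
      (∀ β : Finset E, IsClot F β →
        cmplx F.n (fun i => lk F β ∩ F.filt i) < cmplx F.n F.filt)) := by
  have hAeq : sSup {k | k ≤ F.n ∧ (F.filt (F.n - k)).Nonempty} = compA F := rfl
  refine ⟨?_, ?_, ?_⟩
  · -- residual complex
    intro hBtop _
    refine cmplx_lt (fun i => Set.inter_subset_right) hne ?_
    rw [hAeq]
    by_cases hB0 : compB F = 0
    · left
      ext σ
      simp only [Set.mem_inter_iff, Set.mem_empty_iff_false, iff_false, not_and]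
      rintro ⟨hσK, hσres⟩ hσf
      rw [nrm_eq_card F hσf, hB0, nonpos_iff_eq_zero, Nat.cast_eq_zero,
        Finset.card_eq_zero] at hσres
      exact F.K.empty_notMem (hσres ▸ hσK)
    · right
      refine ⟨compB F - 1, ?_, ?_⟩
      · -- compB F - 1 < compB F
        obtain ⟨m, hm⟩ : ∃ m : ℕ, compB F = (m : ℕ∞) :=
          ⟨(compB F).toNat, (ENat.coe_toNat hBtop).symm⟩
        have hm0 : m ≠ 0 := fun h => hB0 (by rw [hm, h]; rfl)
        show compB F - 1 < compB F
        rw [hm]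
        have h1 : ((m - 1 : ℕ) : ℕ∞) < (m : ℕ∞) := by
          exact_mod_cast Nat.sub_lt (Nat.pos_of_ne_zero hm0) one_pos
        rwa [ENat.coe_sub, Nat.cast_one] at h1
      · rintro σ ⟨⟨hσK, hσres⟩, hσf⟩
        rw [nrm_eq_card F hσf] at hσres
        exact tsub_le_tsub_right hσres 1
  · -- subcomplexes
    intro L _
    exact cmplx_le fun i => Set.inter_subset_right
  · -- links of clots
    rintro β ⟨hβ, hβmax⟩
    refine cmplx_lt (fun i => Set.inter_subset_right) hne ?_
    left
    rw [hAeq]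
    ext α
    simp only [Set.mem_inter_iff, Set.mem_empty_iff_false, iff_false, not_and]
    rintro ⟨hαK, hdisj, hunion⟩ hαf
    have hαβ : α ∪ β ∈ F.filt (F.n - compA F) := by
      refine full_mem F hfull hunion fun v hv => ?_
      rcases Finset.mem_union.1 hv with hvα | hvβ
      · exact mem_creal_of_mem hαf hvα
      · exact mem_creal_of_mem hβ hvβ
    have hcard := hβmax _ hαβ
    rw [Finset.card_union_of_disjoint hdisj] at hcard
    have hα0 : α.card = 0 := by omega
    exact F.K.empty_notMem (Finset.card_eq_zero.1 hα0 ▸ hαK)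

end
end

section
/- Let K be a full filtered complex with comp(K) = (a,b), b finite. Then K = L(K) ∪ ⋃_{β ∈ B(K)} β * L_β, and L(K) ∩ ⋃_{β ∈ B(K)} β * L_β = ⋃_{β ∈ B(K)} ∂β * L_β. Moreover, the open complements satisfy |K| \ |L(K)| = ⊔_{β ∈ B(K)} (|β * L_β| \ |∂β * L_β|), a disjoint union. -/
open Finset Set
open scoped Classical
noncomputable section
open Finset Set
open scoped Classical

variable {E : Type*} [NormedAddCommGroup E] [NormedSpace ℝ E]

/-- The join `β * L`: faces `γ ∪ α` with `γ ⊆ β` and `α ∈ L` (or `α = ∅`). -/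
def joinCx (β : Finset E) (L : Set (Finset E)) : Set (Finset E) :=
  {τ | τ.Nonempty ∧ ∃ γ α, γ ⊆ β ∧ (α ∈ L ∨ α = ∅) ∧ τ = γ ∪ α}

/-- The join `∂β * L`: faces `γ ∪ α` with `γ ⊊ β` and `α ∈ L` (or `α = ∅`). -/
def bdryJoinCx (β : Finset E) (L : Set (Finset E)) : Set (Finset E) :=
  {τ | τ.Nonempty ∧ ∃ γ α, γ ⊂ β ∧ (α ∈ L ∨ α = ∅) ∧ τ = γ ∪ α}


/-! ### Auxiliary lemmas -/

lemma mem_creal_iff {S : Set (Finset E)} {x : E} :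
    x ∈ creal S ↔ ∃ s ∈ S, x ∈ convexHull ℝ (s : Set E) := by simp [creal]

lemma face_nonempty {F : FilteredComplex E} {σ : Finset E} (h : σ ∈ F.K.faces) : σ.Nonempty := by
  rcases σ.eq_empty_or_nonempty with rfl | h'
  · exact absurd h F.K.empty_notMem
  · exact h'

lemma vertex_mem_creal (F : FilteredComplex E) {ℓ : ℕ} {β : Finset E} (hβ : β ∈ F.filt ℓ)
    {v : E} (hv : v ∈ β) : v ∈ creal (F.filt ℓ) :=
  mem_creal_iff.2 ⟨β, hβ, subset_convexHull ℝ _ hv⟩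

lemma centroid_subset_eq {t t' : Finset E} (hind : AffineIndependent ℝ ((↑) : t → E))
    (htne : t.Nonempty) (hsub : t' ⊆ t) (hx : t.centroid ℝ id ∈ convexHull ℝ (t' : Set E)) :
    t' = t := by
  obtain ⟨w, hw0, hw1, hwx⟩ := Finset.mem_convexHull.1 hx
  have hcard : (0:ℝ) < (t.card : ℝ) := by exact_mod_cast htne.card_pos
  have h1 : t.centroid ℝ id = t.affineCombination ℝ id (t.centroidWeights ℝ) :=
    t.centroid_def ℝ id
  have h2 : t'.affineCombination ℝ id w = t.centroid ℝ id := by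
    rw [affineCombination_eq_centerMass hw1, hwx]
  have h3 : t'.affineCombination ℝ id w = t.affineCombination ℝ id (Set.indicator ↑t' w) :=
    Finset.affineCombination_indicator_subset w id hsub
  have h4 : t.attach.affineCombination ℝ ((↑) : t → E) ((t.centroidWeights ℝ) ∘ (↑))
      = t.attach.affineCombination ℝ ((↑) : t → E) ((Set.indicator ↑t' w) ∘ (↑)) := by
    rw [Finset.attach_affineCombination_coe, Finset.attach_affineCombination_coe, ← h1, ← h3, h2]
  have hs1 : ∑ i ∈ t.attach, ((t.centroidWeights ℝ) ∘ (↑)) i = 1 := by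
    simp only [Function.comp_apply]
    rw [Finset.sum_attach t fun x => t.centroidWeights ℝ x]
    exact t.sum_centroidWeights_eq_one_of_nonempty ℝ htne
  have hs2 : ∑ i ∈ t.attach, ((Set.indicator ↑t' w) ∘ (↑)) i = 1 := by
    simp only [Function.comp_apply]
    rw [Finset.sum_attach t fun x => Set.indicator ↑t' w x]
    rw [← Finset.sum_indicator_subset w hsub] at hw1
    exact hw1
  have h5 := hind.indicator_eq_of_affineCombination_eq t.attach t.attach _ _ hs1 hs2 h4
  refine hsub.antisymm fun v hv => ?_
  have hv' : (⟨v, hv⟩ : {x // x ∈ t}) ∈ t.attach := Finset.mem_attach _ _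
  have h6 : ((t.centroidWeights ℝ) ∘ (↑)) (⟨v, hv⟩ : {x // x ∈ t})
      = ((Set.indicator ↑t' w) ∘ (↑)) (⟨v, hv⟩ : {x // x ∈ t}) := by
    have := congrFun h5 ⟨v, hv⟩
    rwa [Set.indicator_of_mem (by exact_mod_cast hv'),
      Set.indicator_of_mem (by exact_mod_cast hv')] at this
  simp only [Function.comp_apply] at h6
  by_contra hvt'
  rw [Set.indicator_of_notMem (by exact_mod_cast hvt')] at h6
  rw [Finset.centroidWeights_apply] at h6
  exact (inv_ne_zero (ne_of_gt hcard)) h6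

lemma exists_carrier (F : FilteredComplex E) {x : E} (hx : x ∈ creal F.K.faces) :
    ∃ σ ∈ F.K.faces, x ∈ convexHull ℝ (σ : Set E) ∧
      ∀ s ∈ F.K.faces, x ∈ convexHull ℝ (s : Set E) → σ ⊆ s := by
  obtain ⟨s₀, hs₀, hxs₀⟩ := mem_creal_iff.1 hx
  have hP : ∃ k, ∃ σ ∈ F.K.faces, x ∈ convexHull ℝ (σ : Set E) ∧ σ.card = k :=
    ⟨s₀.card, s₀, hs₀, hxs₀, rfl⟩
  obtain ⟨σ, hσ, hxσ, hcard⟩ := Nat.find_spec hP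
  refine ⟨σ, hσ, hxσ, fun s hs hxs => ?_⟩
  have hmem : x ∈ convexHull ℝ ((σ ∩ s : Finset E) : Set E) := by
    have := F.K.inter_subset_convexHull hσ hs ⟨hxσ, hxs⟩
    rwa [← Finset.coe_inter] at this
  have hne : (σ ∩ s).Nonempty := by
    rcases (σ ∩ s).eq_empty_or_nonempty with he | h'
    · rw [he] at hmem; simp at hmem
    · exact h'
  have hfaces : σ ∩ s ∈ F.K.faces := F.K.down_closed hσ Finset.inter_subset_left hne
  have hle : Nat.find hP ≤ (σ ∩ s).card := Nat.find_min' hP ⟨σ ∩ s, hfaces, hmem, rfl⟩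
  have heq : σ ∩ s = σ := Finset.eq_of_subset_of_card_le Finset.inter_subset_left
    (by omega)
  exact Finset.inter_eq_left.mp heq

lemma creal_mem_iff_carrier {F : FilteredComplex E} {S : Set (Finset E)} (hS : S ⊆ F.K.faces)
    (hdc : ∀ s ∈ S, ∀ τ : Finset E, τ ⊆ s → τ.Nonempty → τ ∈ S)
    {x : E} {σ : Finset E} (hσ : σ ∈ F.K.faces) (hxσ : x ∈ convexHull ℝ (σ : Set E))
    (hmin : ∀ s ∈ F.K.faces, x ∈ convexHull ℝ (s : Set E) → σ ⊆ s) :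
    x ∈ creal S ↔ σ ∈ S := by
  constructor
  · intro hx
    obtain ⟨s, hs, hxs⟩ := mem_creal_iff.1 hx
    exact hdc s hs σ (hmin s (hS hs) hxs) (face_nonempty hσ)
  · intro h; exact mem_creal_iff.2 ⟨σ, h, hxσ⟩

lemma filter_mem_filt {F : FilteredComplex E} (hfull : F.Full) {σ : Finset E}
    (hσ : σ ∈ F.K.faces) (ℓ : ℕ)
    (hne : (σ.filter (fun v => v ∈ creal (F.filt ℓ))).Nonempty) :
    σ.filter (fun v => v ∈ creal (F.filt ℓ)) ∈ F.filt ℓ := by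
  rcases hfull σ hσ ℓ with hemp | ⟨t, htσ, htne, heq⟩
  · exfalso
    obtain ⟨v, hv⟩ := hne
    rw [Finset.mem_filter] at hv
    have : v ∈ convexHull ℝ (σ : Set E) ∩ creal (F.filt ℓ) :=
      ⟨subset_convexHull ℝ _ hv.1, hv.2⟩
    rw [hemp] at this; exact this
  · have htfaces : t ∈ F.K.faces := F.K.down_closed hσ htσ htne
    have hfilt_eq : σ.filter (fun v => v ∈ creal (F.filt ℓ)) = t := by
      apply Finset.Subset.antisymm
      · intro v hv
        rw [Finset.mem_filter] at hv
        have hvt : v ∈ convexHull ℝ (t : Set E) := by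
          rw [← heq]; exact ⟨subset_convexHull ℝ _ hv.1, hv.2⟩
        have hvert : v ∈ F.K.vertices := Geometry.SimplicialComplex.mem_vertices.2
          (F.K.down_closed hσ (Finset.singleton_subset_iff.2 hv.1) (Finset.singleton_nonempty _))
        exact (Geometry.SimplicialComplex.vertex_mem_convexHull_iff hvert htfaces).1 hvt
      · intro v hv
        rw [Finset.mem_filter]
        have : v ∈ convexHull ℝ (σ : Set E) ∩ creal (F.filt ℓ) := by
          rw [heq]; exact subset_convexHull ℝ _ hv
        exact ⟨htσ hv, this.2⟩
    rw [hfilt_eq]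
    have hc : t.centroid ℝ id ∈ convexHull ℝ (t : Set E) := t.centroid_mem_convexHull htne
    have hc2 : t.centroid ℝ id ∈ creal (F.filt ℓ) := by
      have : t.centroid ℝ id ∈ convexHull ℝ (σ : Set E) ∩ creal (F.filt ℓ) := by
        rw [heq]; exact hc
      exact this.2
    obtain ⟨s, hs, hcs⟩ := mem_creal_iff.1 hc2
    have hsfaces : s ∈ F.K.faces := F.filt_sub ℓ hs
    have hmem : t.centroid ℝ id ∈ convexHull ℝ ((t ∩ s : Finset E) : Set E) := by
      have := F.K.inter_subset_convexHull htfaces hsfaces ⟨hc, hcs⟩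
      rwa [← Finset.coe_inter] at this
    have hts : t ∩ s = t :=
      centroid_subset_eq (F.K.indep htfaces) htne Finset.inter_subset_left hmem
    exact F.filt_down ℓ s hs t htfaces (Finset.inter_eq_left.mp hts)

lemma clot_compB {F : FilteredComplex E} {β : Finset E} (hβ : IsClot F β) :
    compB F = (β.card : ℕ∞) - 1 := by
  apply le_antisymm
  · exact iSup₂_le fun σ hσ =>
      tsub_le_tsub_right (by exact_mod_cast hβ.2 σ hσ) 1
  · exact le_iSup₂ (f := fun σ _ => ((σ.card : ℕ∞) - 1)) β hβ.1

lemma clot_card_not_le {F : FilteredComplex E} {β : Finset E} (hβ : IsClot F β) :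
    ¬ ((β.card : ℕ∞) ≤ compB F) := by
  rw [clot_compB hβ]
  have h1 : 1 ≤ β.card := (face_nonempty (F.filt_sub _ hβ.1)).card_pos
  rw [← Nat.cast_one, ← ENat.coe_sub, Nat.cast_le]
  omega

lemma ssubset_card_le {F : FilteredComplex E} {β γ : Finset E} (hβ : IsClot F β) (hγ : γ ⊂ β) :
    (γ.card : ℕ∞) ≤ compB F := by
  rw [clot_compB hβ, ← Nat.cast_one, ← ENat.coe_sub, Nat.cast_le]
  have := Finset.card_lt_card hγ
  omega

lemma lk_vertex_not_creal {F : FilteredComplex E} (hfull : F.Full) {β α : Finset E}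
    (hβ : IsClot F β) (hα : α ∈ lk F β) {v : E} (hv : v ∈ α) :
    v ∉ creal (F.filt (F.n - compA F)) := by
  intro hvc
  obtain ⟨hαf, hdisj, hαβ⟩ := hα
  set t := (α ∪ β).filter (fun u => u ∈ creal (F.filt (F.n - compA F))) with ht
  have hvt : v ∈ t := Finset.mem_filter.2 ⟨Finset.mem_union_left _ hv, hvc⟩
  have hβt : β ⊆ t := fun u hu => Finset.mem_filter.2
    ⟨Finset.mem_union_right _ hu, vertex_mem_creal F hβ.1 hu⟩
  have htf : t ∈ F.filt (F.n - compA F) := filter_mem_filt hfull hαβ _ ⟨v, hvt⟩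
  have hle : t.card ≤ β.card := hβ.2 t htf
  have hlt : β.card < t.card := Finset.card_lt_card
    ((Finset.ssubset_iff_of_subset hβt).2 ⟨v, hvt, Finset.disjoint_left.1 hdisj hv⟩)
  omega

lemma join_filter_eq {F : FilteredComplex E} (hfull : F.Full) {β γ α : Finset E}
    (hβ : IsClot F β) (hγ : γ ⊆ β) (hα : α ∈ lk F β ∨ α = ∅) :
    (γ ∪ α).filter (fun v => v ∈ creal (F.filt (F.n - compA F))) = γ := by
  apply Finset.Subset.antisymm
  · intro v hv
    rw [Finset.mem_filter] at hv
    rcases Finset.mem_union.1 hv.1 with h | h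
    · exact h
    · rcases hα with hα | rfl
      · exact absurd hv.2 (lk_vertex_not_creal hfull hβ hα h)
      · exact absurd h (Finset.notMem_empty v)
  · intro v hv
    exact Finset.mem_filter.2 ⟨Finset.mem_union_left _ hv, vertex_mem_creal F hβ.1 (hγ hv)⟩

lemma join_subset_faces {F : FilteredComplex E} {β : Finset E} (hβ : β ∈ F.K.faces) :
    joinCx β (lk F β) ⊆ F.K.faces := by
  rintro τ ⟨hτne, γ, α, hγ, hα, rfl⟩
  rcases hα with hα | rfl
  · exact F.K.down_closed hα.2.2
      (Finset.union_subset (hγ.trans Finset.subset_union_right) Finset.subset_union_left)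
      hτne
  · exact F.K.down_closed hβ (by simpa using hγ) hτne

lemma bdry_subset_join {β : Finset E} {L : Set (Finset E)} :
    bdryJoinCx β L ⊆ joinCx β L := by
  rintro τ ⟨hne, γ, α, hγ, hα, rfl⟩
  exact ⟨hne, γ, α, hγ.subset, hα, rfl⟩

lemma join_down {F : FilteredComplex E} {β : Finset E} (hβ : β ∈ F.K.faces) :
    ∀ s ∈ joinCx β (lk F β), ∀ τ : Finset E, τ ⊆ s → τ.Nonempty → τ ∈ joinCx β (lk F β) := by
  rintro s ⟨hne, γ, α, hγ, hα, rfl⟩ τ hτ hτne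
  have hdecomp : τ = (τ ∩ γ) ∪ (τ \ γ) := by
    ext a; simp only [Finset.mem_union, Finset.mem_inter, Finset.mem_sdiff]; tauto
  have hsub : τ \ γ ⊆ α := by
    intro v hv; rw [Finset.mem_sdiff] at hv
    rcases Finset.mem_union.1 (hτ hv.1) with h | h
    · exact absurd h hv.2
    · exact h
  refine ⟨hτne, τ ∩ γ, τ \ γ, Finset.inter_subset_right.trans hγ, ?_, hdecomp⟩
  rcases (τ \ γ).eq_empty_or_nonempty with he | hne'
  · right; exact he
  · left
    rcases hα with hα | rfl
    · refine ⟨F.K.down_closed hα.1 hsub hne', hα.2.1.mono_left hsub, ?_⟩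
      refine F.K.down_closed hα.2.2 (Finset.union_subset_union_left hsub) ?_
      obtain ⟨b, hb⟩ := face_nonempty hβ
      exact ⟨b, Finset.mem_union_right _ hb⟩
    · exfalso; obtain ⟨v, hv⟩ := hne'; exact absurd (hsub hv) (Finset.notMem_empty v)

lemma bdry_down {F : FilteredComplex E} {β : Finset E} (hβ : β ∈ F.K.faces) :
    ∀ s ∈ bdryJoinCx β (lk F β), ∀ τ : Finset E, τ ⊆ s → τ.Nonempty →
      τ ∈ bdryJoinCx β (lk F β) := by
  rintro s ⟨hne, γ, α, hγ, hα, rfl⟩ τ hτ hτne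
  have hdecomp : τ = (τ ∩ γ) ∪ (τ \ γ) := by
    ext a; simp only [Finset.mem_union, Finset.mem_inter, Finset.mem_sdiff]; tauto
  have hsub : τ \ γ ⊆ α := by
    intro v hv; rw [Finset.mem_sdiff] at hv
    rcases Finset.mem_union.1 (hτ hv.1) with h | h
    · exact absurd h hv.2
    · exact h
  refine ⟨hτne, τ ∩ γ, τ \ γ,
    _root_.ssubset_of_subset_of_ssubset Finset.inter_subset_right hγ, ?_, hdecomp⟩
  rcases (τ \ γ).eq_empty_or_nonempty with he | hne'
  · right; exact he
  · left
    rcases hα with hα | rfl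
    · refine ⟨F.K.down_closed hα.1 hsub hne', hα.2.1.mono_left hsub, ?_⟩
      refine F.K.down_closed hα.2.2 (Finset.union_subset_union_left hsub) ?_
      obtain ⟨b, hb⟩ := face_nonempty hβ
      exact ⟨b, Finset.mem_union_right _ hb⟩
    · exfalso; obtain ⟨v, hv⟩ := hne'; exact absurd (hsub hv) (Finset.notMem_empty v)

lemma resid_down {F : FilteredComplex E} :
    ∀ s ∈ resid F, ∀ τ : Finset E, τ ⊆ s → τ.Nonempty → τ ∈ resid F := by
  rintro s ⟨hsf, hsn⟩ τ hτ hτne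
  refine ⟨F.K.down_closed hsf hτ hτne, le_trans ?_ hsn⟩
  have h : F.nrm τ (F.n - compA F) ≤ F.nrm s (F.n - compA F) :=
    Finset.card_le_card (Finset.filter_subset_filter _ hτ)
  exact_mod_cast h

lemma notresid_clot {F : FilteredComplex E} (hfull : F.Full) {σ : Finset E}
    (hσ : σ ∈ F.K.faces) (hr : σ ∉ resid F) :
    ∃ t : Finset E, IsClot F t ∧ σ ∈ joinCx t (lk F t) := by
  set t := σ.filter (fun v => v ∈ creal (F.filt (F.n - compA F))) with ht
  have hnle : ¬ ((F.nrm σ (F.n - compA F) : ℕ∞) ≤ compB F) := fun h => hr ⟨hσ, h⟩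
  have hnrm : F.nrm σ (F.n - compA F) = t.card := rfl
  have htne : t.Nonempty := by
    rcases t.eq_empty_or_nonempty with he | h
    · exfalso; apply hnle
      rw [hnrm, he, Finset.card_empty]
      exact zero_le
    · exact h
  have htf : t ∈ F.filt (F.n - compA F) := filter_mem_filt hfull hσ _ htne
  have hclot : IsClot F t := by
    refine ⟨htf, fun τ hτ => ?_⟩
    by_contra hlt
    push_neg at hlt
    apply hnle
    have h1 : (F.nrm σ (F.n - compA F) : ℕ∞) ≤ (τ.card : ℕ∞) - 1 := by
      rw [hnrm, ← Nat.cast_one, ← ENat.coe_sub, Nat.cast_le]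
      omega
    exact h1.trans (le_iSup₂ (f := fun σ _ => ((σ.card : ℕ∞) - 1)) τ hτ)
  have hsub : t ⊆ σ := Finset.filter_subset _ _
  refine ⟨t, hclot, face_nonempty hσ, t, σ \ t, Finset.Subset.refl t, ?_,
    (Finset.union_sdiff_of_subset hsub).symm⟩
  rcases (σ \ t).eq_empty_or_nonempty with he | hne'
  · right; exact he
  · left
    exact ⟨F.K.down_closed hσ Finset.sdiff_subset hne', Finset.sdiff_disjoint,
      by rwa [Finset.sdiff_union_of_subset hsub]⟩

lemma join_resid_iff {F : FilteredComplex E} (hfull : F.Full) {β σ : Finset E}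
    (hβ : IsClot F β) (hj : σ ∈ joinCx β (lk F β)) :
    σ ∈ resid F ↔ σ ∈ bdryJoinCx β (lk F β) := by
  obtain ⟨hne, γ, α, hγ, hα, rfl⟩ := hj
  have hnrm : F.nrm (γ ∪ α) (F.n - compA F) = γ.card := by
    show ((γ ∪ α).filter (fun v => v ∈ creal (F.filt (F.n - compA F)))).card = γ.card
    rw [join_filter_eq hfull hβ hγ hα]
  constructor
  · rintro ⟨hf, hle⟩
    have hγβ : γ ≠ β := by
      rintro rfl
      rw [hnrm] at hle
      exact clot_card_not_le hβ hle
    exact ⟨hne, γ, α, Finset.ssubset_iff_subset_ne.2 ⟨hγ, hγβ⟩, hα, rfl⟩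
  · rintro ⟨hne', γ', α', hγ', hα', heq⟩
    refine ⟨join_subset_faces (F.filt_sub _ hβ.1) ⟨hne, γ, α, hγ, hα, rfl⟩, ?_⟩
    have hnrm' : F.nrm (γ ∪ α) (F.n - compA F) = γ'.card := by
      show ((γ ∪ α).filter (fun v => v ∈ creal (F.filt (F.n - compA F)))).card = γ'.card
      rw [heq, join_filter_eq hfull hβ hγ'.subset hα']
    rw [hnrm']
    exact ssubset_card_le hβ hγ'

lemma join_notresid_filter {F : FilteredComplex E} (hfull : F.Full) {β σ : Finset E}
    (hβ : IsClot F β) (hj : σ ∈ joinCx β (lk F β)) (hr : σ ∉ resid F) :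
    σ.filter (fun v => v ∈ creal (F.filt (F.n - compA F))) = β := by
  obtain ⟨hne, γ, α, hγ, hα, rfl⟩ := hj
  rw [join_filter_eq hfull hβ hγ hα]
  by_contra hγβ
  have hss : γ ⊂ β := Finset.ssubset_iff_subset_ne.2 ⟨hγ, hγβ⟩
  apply hr
  refine ⟨join_subset_faces (F.filt_sub _ hβ.1) ⟨hne, γ, α, hγ, hα, rfl⟩, ?_⟩
  have hnrm : F.nrm (γ ∪ α) (F.n - compA F) = γ.card := by
    show ((γ ∪ α).filter (fun v => v ∈ creal (F.filt (F.n - compA F)))).card = γ.card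
    rw [join_filter_eq hfull hβ hγ hα]
  rw [hnrm]
  exact ssubset_card_le hβ hss

/-- Let `K` be a full filtered complex with `comp K = (a,b)`, `b` finite.
Then `K = L(K) ∪ ⋃_{β clot} β * L_β`, and
`L(K) ∩ ⋃_β β * L_β = ⋃_β ∂β * L_β`.  Moreover the open complements satisfy
`|K| \ |L(K)| = ⊔_β (|β * L_β| \ |∂β * L_β|)`, a disjoint union. -/
theorem clot_decomposition (F : FilteredComplex E) (hfull : F.Full)
    (hne : (F.filt F.n).Nonempty) (hfin : compB F ≠ ⊤) :
    (F.K.faces = resid F ∪ ⋃ β ∈ {β | IsClot F β}, joinCx β (lk F β)) ∧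
    (resid F ∩ ⋃ β ∈ {β | IsClot F β}, joinCx β (lk F β) =
      ⋃ β ∈ {β | IsClot F β}, bdryJoinCx β (lk F β)) ∧
    (creal F.K.faces \ creal (resid F) =
      ⋃ β ∈ {β | IsClot F β},
        (creal (joinCx β (lk F β)) \ creal (bdryJoinCx β (lk F β)))) ∧
    (∀ β γ : Finset E, IsClot F β → IsClot F γ → β ≠ γ →
      Disjoint (creal (joinCx β (lk F β)) \ creal (bdryJoinCx β (lk F β)))
        (creal (joinCx γ (lk F γ)) \ creal (bdryJoinCx γ (lk F γ)))) := by
  have hcar := fun {x : E} (hx : x ∈ creal F.K.faces) => exists_carrier F hx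
  refine ⟨?_, ?_, ?_, ?_⟩
  · -- Part 1
    ext σ
    constructor
    · intro hσ
      by_cases hres : σ ∈ resid F
      · exact Or.inl hres
      · obtain ⟨t, hclot, hjoin⟩ := notresid_clot hfull hσ hres
        exact Or.inr (Set.mem_iUnion₂.2 ⟨t, hclot, hjoin⟩)
    · rintro (h | h)
      · exact h.1
      · obtain ⟨β, hβ, hj⟩ := Set.mem_iUnion₂.1 h
        exact join_subset_faces (F.filt_sub _ hβ.1) hj
  · -- Part 2
    ext σ
    constructor
    · rintro ⟨hres, hU⟩
      obtain ⟨β, hβ, hj⟩ := Set.mem_iUnion₂.1 hU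
      exact Set.mem_iUnion₂.2 ⟨β, hβ, (join_resid_iff hfull hβ hj).1 hres⟩
    · intro h
      obtain ⟨β, hβ, hb⟩ := Set.mem_iUnion₂.1 h
      have hj : σ ∈ joinCx β (lk F β) := bdry_subset_join hb
      exact ⟨(join_resid_iff hfull hβ hj).2 hb, Set.mem_iUnion₂.2 ⟨β, hβ, hj⟩⟩
  · -- Part 3
    ext x
    constructor
    · rintro ⟨hxK, hxr⟩
      obtain ⟨σ, hσ, hxσ, hmin⟩ := exists_carrier F hxK
      have hres : σ ∉ resid F := fun h =>
        hxr ((creal_mem_iff_carrier (fun s hs => hs.1) resid_down hσ hxσ hmin).2 h)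
      obtain ⟨t, hclot, hjoin⟩ := notresid_clot hfull hσ hres
      have htfaces : t ∈ F.K.faces := F.filt_sub _ hclot.1
      refine Set.mem_iUnion₂.2 ⟨t, hclot, mem_creal_iff.2 ⟨σ, hjoin, hxσ⟩, fun hxb => ?_⟩
      have hb : σ ∈ bdryJoinCx t (lk F t) :=
        (creal_mem_iff_carrier (fun s hs => join_subset_faces htfaces (bdry_subset_join hs))
          (bdry_down htfaces) hσ hxσ hmin).1 hxb
      exact hres ((join_resid_iff hfull hclot hjoin).2 hb)
    · intro hx
      obtain ⟨β, hβ, hxj, hxb⟩ := Set.mem_iUnion₂.1 hx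
      have hβf : β ∈ F.K.faces := F.filt_sub _ hβ.1
      have hxK : x ∈ creal F.K.faces := by
        obtain ⟨s, hs, hxs⟩ := mem_creal_iff.1 hxj
        exact mem_creal_iff.2 ⟨s, join_subset_faces hβf hs, hxs⟩
      obtain ⟨σ, hσ, hxσ, hmin⟩ := exists_carrier F hxK
      have hσj : σ ∈ joinCx β (lk F β) :=
        (creal_mem_iff_carrier (join_subset_faces hβf) (join_down hβf) hσ hxσ hmin).1 hxj
      have hσb : σ ∉ bdryJoinCx β (lk F β) := fun h => hxb
        ((creal_mem_iff_carrier (fun s hs => join_subset_faces hβf (bdry_subset_join hs))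
          (bdry_down hβf) hσ hxσ hmin).2 h)
      refine ⟨hxK, fun hxr => ?_⟩
      have hσr : σ ∈ resid F :=
        (creal_mem_iff_carrier (fun s hs => hs.1) resid_down hσ hxσ hmin).1 hxr
      exact hσb ((join_resid_iff hfull hβ hσj).1 hσr)
  · -- Part 4
    intro β γ hβ hγ hneq
    rw [Set.disjoint_left]
    rintro x ⟨hxjβ, hxbβ⟩ ⟨hxjγ, hxbγ⟩
    have hβf : β ∈ F.K.faces := F.filt_sub _ hβ.1
    have hγf : γ ∈ F.K.faces := F.filt_sub _ hγ.1
    have hxK : x ∈ creal F.K.faces := by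
      obtain ⟨s, hs, hxs⟩ := mem_creal_iff.1 hxjβ
      exact mem_creal_iff.2 ⟨s, join_subset_faces hβf hs, hxs⟩
    obtain ⟨σ, hσ, hxσ, hmin⟩ := exists_carrier F hxK
    have hσjβ : σ ∈ joinCx β (lk F β) :=
      (creal_mem_iff_carrier (join_subset_faces hβf) (join_down hβf) hσ hxσ hmin).1 hxjβ
    have hσjγ : σ ∈ joinCx γ (lk F γ) :=
      (creal_mem_iff_carrier (join_subset_faces hγf) (join_down hγf) hσ hxσ hmin).1 hxjγ
    have hσr : σ ∉ resid F := fun h => hxbβ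
      ((creal_mem_iff_carrier (fun s hs => join_subset_faces hβf (bdry_subset_join hs))
        (bdry_down hβf) hσ hxσ hmin).2 ((join_resid_iff hfull hβ hσjβ).1 h))
    exact hneq ((join_notresid_filter hfull hβ hσjβ hσr).symm.trans
      (join_notresid_filter hfull hγ hσjγ hσr))

end
end
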